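/- Let α ∈ (0,1], let g : ℕ^E → ℝ be normalized, and let c be nonnegative linear. Suppose x ∈ ℕ^E is obtained from the zero vector by steps x_i = x_{i-1} + l_i·χ_{e_i} with g(x_{i-1} + l_i·χ_{e_i}) − g(x_{i-1}) − (1+α)·c(l_i·χ_{e_i}) ≥ l_i·τ_α for each step. Then c(x) ≤ (1/(1+α))·g(x) − (τ_α/(1+α))·x(E). (Cost upper bound for the accepted solution in the αG−C streaming algorithm.) -/

import Mathlib

/-!
The potential `(1 + α) c(y) + τ_α y(E)` is additive in `y`, so the acceptance condition of each
step says exactly that `g` grows at least as much as the potential along that step. Telescoping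
over the steps bounds the potential of `x` by `g x`, and dividing by `1 + α` gives the claim.
-/

open Finset

theorem sub_le_sub_of_forall_succ_sub_le {a b : ℕ → ℝ} {q : ℕ}
    (h : ∀ i < q, b (i + 1) - b i ≤ a (i + 1) - a i) : b q - b 0 ≤ a q - a 0 := by
  rw [← sum_range_sub, ← sum_range_sub]
  exact sum_le_sum fun i hi => h i (mem_range.mp hi)

section

variable {E : Type*} [Fintype E]

theorem sum_mul_cast_add (w : E → ℝ) (x y : E → ℕ) :
    ∑ e, w e * ((x + y) e : ℝ) = ∑ e, w e * (x e : ℝ) + ∑ e, w e * (y e : ℝ) := by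
  simp only [Pi.add_apply, Nat.cast_add, mul_add, sum_add_distrib]

theorem sum_cast_nsmul_single [DecidableEq E] (n : ℕ) (e : E) :
    ∑ e', ((n • Pi.single e 1 : E → ℕ) e' : ℝ) = n := by
  simp [Pi.single_apply]

end

theorem stmt_10_general {E : Type*} [Fintype E] [DecidableEq E]
    (α : ℝ) (hα0 : 0 < α)
    (g c : (E → ℕ) → ℝ)
    (hg0 : g 0 = 0)
    (w : E → ℝ)
    (hc : ∀ x : E → ℕ, c x = ∑ e, w e * (x e : ℝ))
    (τα : ℝ)
    (q : ℕ) (e : ℕ → E) (l : ℕ → ℕ)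
    (xs : ℕ → E → ℕ) (hx0 : xs 0 = 0)
    (hstep : ∀ i < q, xs (i + 1) = xs i + (l i) • Pi.single (e i) 1)
    (x : E → ℕ) (hxq : xs q = x)
    (hineq : ∀ i < q,
      g (xs i + (l i) • Pi.single (e i) 1) - g (xs i)
        - (1 + α) * c ((l i) • Pi.single (e i) 1) ≥ (l i : ℝ) * τα) :
    c x ≤ (1 / (1 + α)) * g x - (τα / (1 + α)) * (∑ e', (x e' : ℝ)) := by
  have hc_add : ∀ a b, c (a + b) = c a + c b := fun a b => by simp only [hc, sum_mul_cast_add]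
  set φ : (E → ℕ) → ℝ := fun y => (1 + α) * c y + τα * ∑ e', (y e' : ℝ)
  have hφ_step : ∀ i < q, φ (xs (i + 1)) - φ (xs i) ≤ g (xs (i + 1)) - g (xs i) := by
    intro i hi
    rw [hstep i hi]
    simp only [φ, hc_add, Pi.add_apply, Nat.cast_add, sum_add_distrib, sum_cast_nsmul_single]
    linarith [hineq i hi]
  have hφ0 : φ 0 = 0 := by simp [φ, hc]
  have hφx : φ x ≤ g x := by
    simpa [hx0, hxq, hg0, hφ0] using
      sub_le_sub_of_forall_succ_sub_le (a := fun i => g (xs i)) (b := fun i => φ (xs i)) hφ_step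
  rw [show (1 / (1 + α)) * g x - (τα / (1 + α)) * (∑ e', (x e' : ℝ))
      = (g x - τα * ∑ e', (x e' : ℝ)) / (1 + α) by ring, le_div_iff₀ (by linarith)]
  linarith [hφx]

/-- Cost upper bound for the accepted solution in the αG−C streaming algorithm. -/
theorem stmt_10 {E : Type*} [Fintype E] [DecidableEq E]
    (α : ℝ) (hα0 : 0 < α) (hα1 : α ≤ 1)
    (g c : (E → ℕ) → ℝ)
    (hg0 : g 0 = 0)
    (w : E → ℝ) (hw : ∀ e, 0 ≤ w e)
    (hc : ∀ x : E → ℕ, c x = ∑ e, w e * (x e : ℝ))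
    (τα : ℝ)
    (q : ℕ) (e : ℕ → E) (l : ℕ → ℕ) (hl : ∀ i < q, 0 < l i)
    (xs : ℕ → E → ℕ) (hx0 : xs 0 = 0)
    (hstep : ∀ i < q, xs (i + 1) = xs i + (l i) • Pi.single (e i) 1)
    (x : E → ℕ) (hxq : xs q = x)
    (hineq : ∀ i < q,
      g (xs i + (l i) • Pi.single (e i) 1) - g (xs i)
        - (1 + α) * c ((l i) • Pi.single (e i) 1) ≥ (l i : ℝ) * τα) :
    c x ≤ (1 / (1 + α)) * g x - (τα / (1 + α)) * (∑ e', (x e' : ℝ)) :=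
  stmt_10_general α hα0 g c hg0 w hc τα q e l xs hx0 hstep x hxq hineq
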